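/- arXiv:1609.05312 — 8 statements merged into one kernel-verified Lean document; each statement's English description precedes it below -/
import Mathlib

section
/- Let k be a field of characteristic different from 2 and 3, let a, c, d ∈ k, and let β ∈ k with β² = d and β ≠ 0. Consider the Weierstrass curve E : y² = x³ + a x² + c x + d over k (assume its discriminant is nonzero, so E is an elliptic curve), and let P = (0, β) be the corresponding affine point of E. Then 3 • P = O (i.e., P is a point of order 3) if and only if c² = 4ad. -/
/-!
`3 • P = 0` means `2 • P = -P`. When `P` is not 2-torsion, `2 • P` is the negative of the third
intersection point `Q` of the tangent line at `P`; as `Q` lies on that line, `Q = P` exactly when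
their `x`-coordinates agree. At `P = (0, β)` the tangent slope is `c / (2β)`, so
`x(2 • P) = c² / (4β²) - a`.
-/

open WeierstrassCurve.Affine WeierstrassCurve.Affine.Point

lemma WeierstrassCurve.Affine.Point.three_nsmul_some_eq_zero_iff {F : Type*} [Field F]
    [DecidableEq F] {W : WeierstrassCurve.Affine F} {x y : F} {h : W.Nonsingular x y}
    (hy : y ≠ W.negY x y) :
    3 • some x y h = 0 ↔ W.addX x x (W.slope x x y y) = x := by
  rw [succ_nsmul, two_nsmul, add_eq_zero_iff_eq_neg, add_self_of_Y_ne' hy, neg_inj, some.injEq,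
    negAddY]
  refine ⟨And.left, fun hx ↦ ⟨hx, ?_⟩⟩
  rw [hx, sub_self, mul_zero, zero_add]

namespace WeierstrassCurve.Affine

variable {k : Type*} [Field k] {W : WeierstrassCurve.Affine k}

lemma negY_zero_of_a₃_eq_zero (ha₃ : W.a₃ = 0) (y : k) : W.negY 0 y = -y := by
  simp [ha₃]

lemma Y_ne_negY_zero_of_a₃_eq_zero (ha₃ : W.a₃ = 0) (h2 : (2 : k) ≠ 0) {y : k} (hy : y ≠ 0) :
    y ≠ W.negY 0 y := by
  rw [negY_zero_of_a₃_eq_zero ha₃, ne_eq, eq_neg_iff_add_eq_zero, ← two_mul]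
  exact mul_ne_zero h2 hy

lemma slope_zero_of_a₁_eq_zero_of_a₃_eq_zero [DecidableEq k] (ha₁ : W.a₁ = 0) (ha₃ : W.a₃ = 0)
    (h2 : (2 : k) ≠ 0) {y : k} (hy : y ≠ 0) : W.slope 0 0 y y = W.a₄ / (2 * y) := by
  rw [slope_of_Y_ne rfl (Y_ne_negY_zero_of_a₃_eq_zero ha₃ h2 hy), negY_zero_of_a₃_eq_zero ha₃, ha₁]
  ring

lemma addX_slope_zero_eq_zero_iff [DecidableEq k] (ha₁ : W.a₁ = 0) (ha₃ : W.a₃ = 0)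
    (h2 : (2 : k) ≠ 0) {y : k} (hy : y ≠ 0) :
    W.addX 0 0 (W.slope 0 0 y y) = 0 ↔ W.a₄ ^ 2 = 4 * W.a₂ * y ^ 2 := by
  rw [slope_zero_of_a₁_eq_zero_of_a₃_eq_zero ha₁ ha₃ h2 hy, addX, ha₁, zero_mul, add_zero,
    sub_zero, sub_zero, sub_eq_zero, div_pow, div_eq_iff (pow_ne_zero 2 (mul_ne_zero h2 hy))]
  constructor <;> intro h <;> linear_combination h

end WeierstrassCurve.Affine

open Classical in
theorem order_three_criterion_general {k : Type*} [Field k]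
    (h2 : (2 : k) ≠ 0)
    (a c d β : k) (hβ : β ^ 2 = d) (hβ0 : β ≠ 0)
    (W : WeierstrassCurve.Affine k)
    (hW : W = { a₁ := 0, a₂ := a, a₃ := 0, a₄ := c, a₆ := d })
    (hns : W.Nonsingular 0 β) :
    3 • (WeierstrassCurve.Affine.Point.some _ _ hns) = (0 : W.Point) ↔ c ^ 2 = 4 * a * d := by
  subst hW hβ
  exact (three_nsmul_some_eq_zero_iff (Y_ne_negY_zero_of_a₃_eq_zero rfl h2 hβ0)).trans
    (addX_slope_zero_eq_zero_iff rfl rfl h2 hβ0)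

open Classical in
/-- Order-3 criterion: on `E : y² = x³ + a x² + c x + d` over a field `k` of characteristic
different from 2 and 3, with nonzero discriminant, the point `P = (0, β)` (where `β² = d`,
`β ≠ 0`) satisfies `3 • P = O` if and only if `c² = 4ad`. -/
theorem order_three_criterion {k : Type*} [Field k]
    (h2 : (2 : k) ≠ 0) (h3 : (3 : k) ≠ 0)
    (a c d β : k) (hβ : β ^ 2 = d) (hβ0 : β ≠ 0)
    (W : WeierstrassCurve.Affine k)
    (hW : W = { a₁ := 0, a₂ := a, a₃ := 0, a₄ := c, a₆ := d })
    (hΔ : W.Δ ≠ 0) (hns : W.Nonsingular 0 β) :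
    3 • (WeierstrassCurve.Affine.Point.some _ _ hns) = (0 : W.Point) ↔ c ^ 2 = 4 * a * d :=
  order_three_criterion_general h2 a c d β hβ hβ0 W hW hns
end

section
/- Let k be a field and d ∈ k. If x, y ∈ k satisfy y² = x³ + d and x ≠ 0, then the elements x₂ = (x³ + 4d)/x² and y₂ = (x³ − 8d)·y/x³ satisfy y₂² = x₂³ − 27d. In other words, the map (x, y) ↦ ((x³+4d)/x², (x³−8d)y/x³) sends affine points of the curve y² = x³ + d with x ≠ 0 to affine points of the curve y² = x³ − 27d. -/
/-- The explicit 3-isogeny formula: if `y² = x³ + d` and `x ≠ 0`, then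
`x₂ = (x³ + 4d)/x²` and `y₂ = (x³ - 8d) y / x³` satisfy `y₂² = x₂³ - 27 d`. -/
theorem three_isogeny_formula_j_zero {k : Type*} [Field k] (d x y : k)
    (hx : x ≠ 0) (h : y ^ 2 = x ^ 3 + d) :
    ((x ^ 3 - 8 * d) * y / x ^ 3) ^ 2 = ((x ^ 3 + 4 * d) / x ^ 2) ^ 3 - 27 * d := by
  field_simp
  linear_combination (x ^ 3 - 8 * d) ^ 2 * h
end

section
/- Let k be a field of characteristic different from 2 and 3, let a, b ∈ k, and set a' = −3a and b' = (4a+27b)/9. Write f₁(x) = x³ + a(x−b)² and f₂(x) = x³ + a'(x−b')², and define φ_x(x) = (3x³ + 4ax² − 12abx + 12ab²)/(3x²) and φ_y(x) = −(x³ + 4abx − 8ab²)/x³. Then for every x ∈ k with x ≠ 0 one has f₂(φ_x(x)) = φ_y(x)² · f₁(x). In particular, if (x, y) is an affine point of E₁ : y² = f₁(x) with x ≠ 0, then (φ_x(x), φ_y(x)·y) is an affine point of E₂ : y² = f₂(x). -/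
/-- The explicit 3-isogeny formula for `E₁ : y² = x³ + a(x-b)²` and
`E₂ : y² = x³ + a'(x-b')²` with `a' = -3a`, `b' = (4a+27b)/9`: for all `x ≠ 0`,
`f₂(φ_x(x)) = φ_y(x)² f₁(x)`; in particular, if `y² = f₁(x)` then
`(φ_y(x) y)² = f₂(φ_x(x))`. -/
theorem three_isogeny_formula {k : Type*} [Field k]
    (h2 : (2 : k) ≠ 0) (h3 : (3 : k) ≠ 0)
    (a b a' b' : k) (ha' : a' = -3 * a) (hb' : b' = (4 * a + 27 * b) / 9)
    (x : k) (hx : x ≠ 0) :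
    (((3 * x ^ 3 + 4 * a * x ^ 2 - 12 * a * b * x + 12 * a * b ^ 2) / (3 * x ^ 2)) ^ 3 +
        a' * ((3 * x ^ 3 + 4 * a * x ^ 2 - 12 * a * b * x + 12 * a * b ^ 2) / (3 * x ^ 2)
          - b') ^ 2 =
      (-((x ^ 3 + 4 * a * b * x - 8 * a * b ^ 2) / x ^ 3)) ^ 2 *
        (x ^ 3 + a * (x - b) ^ 2)) ∧
    ∀ y : k, y ^ 2 = x ^ 3 + a * (x - b) ^ 2 →
      (-((x ^ 3 + 4 * a * b * x - 8 * a * b ^ 2) / x ^ 3) * y) ^ 2 =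
        ((3 * x ^ 3 + 4 * a * x ^ 2 - 12 * a * b * x + 12 * a * b ^ 2) / (3 * x ^ 2)) ^ 3 +
          a' * ((3 * x ^ 3 + 4 * a * x ^ 2 - 12 * a * b * x + 12 * a * b ^ 2) / (3 * x ^ 2)
            - b') ^ 2 := by
  subst ha' hb'
  have h9 : (9:k) ≠ 0 := by
    have : (9:k) = 3^2 := by norm_num
    rw [this]; exact pow_ne_zero _ h3
  have hx2 : (3 * x ^ 2 : k) ≠ 0 := mul_ne_zero h3 (pow_ne_zero 2 hx)
  have hA : ((3 * x ^ 2 : k)) ^ 3 ≠ 0 := pow_ne_zero _ hx2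
  have hB : ((3 * x ^ 2) * 9 : k) ^ 2 ≠ 0 := pow_ne_zero _ (mul_ne_zero hx2 h9)
  have hC : ((x ^ 3 : k)) ^ 2 ≠ 0 := pow_ne_zero _ (pow_ne_zero _ hx)
  have key : (((3 * x ^ 3 + 4 * a * x ^ 2 - 12 * a * b * x + 12 * a * b ^ 2) / (3 * x ^ 2)) ^ 3 +
        -3 * a * ((3 * x ^ 3 + 4 * a * x ^ 2 - 12 * a * b * x + 12 * a * b ^ 2) / (3 * x ^ 2)
          - (4 * a + 27 * b) / 9) ^ 2 =
      (-((x ^ 3 + 4 * a * b * x - 8 * a * b ^ 2) / x ^ 3)) ^ 2 *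
        (x ^ 3 + a * (x - b) ^ 2)) := by
    rw [div_sub_div _ _ hx2 h9, div_pow, div_pow, neg_sq, div_pow, ← mul_div_assoc,
      div_mul_eq_mul_div, div_add_div _ _ hA hB, div_eq_div_iff (mul_ne_zero hA hB) hC]
    ring
  refine ⟨key, fun y hy => ?_⟩
  rw [mul_pow, hy]
  exact key.symm
end

section
/- Let k be an algebraically closed field of characteristic different from 2 and 3, and let a, b ∈ k with a·b·(4a+27b) ≠ 0. Define φ : E₁(k) → E₂(k) on E₁ : y² = x³ + a(x−b)² and E₂ : y² = x³ − 3a(x − (4a+27b)/9)² by φ(O) = O, φ(x, y) = O if x = 0, and φ(x, y) = (φ_x(x), φ_y(x)·y) if x ≠ 0, where φ_x(x) = (3x³+4ax²−12abx+12ab²)/(3x²) and φ_y(x) = −(x³+4abx−8ab²)/x³. Then φ is surjective, and the set {P ∈ E₁(k) : φ(P) = O} consists of exactly the three points O, (0, β), (0, −β), where β ∈ k satisfies β² = ab²; in particular this kernel has exactly 3 elements. -/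
/-!
The map is given on `x ≠ 0` by `(x, y) ↦ (X(x), Y(x) y)` and kills exactly the points over
`x = 0`, i.e. `O` and `(0, ±β)`; these are three distinct points since `ab² ≠ 0` and `2 ≠ 0`.
For surjectivity, `X(x) = u` is a cubic equation in `x` whose roots are nonzero (its constant
term is `12ab²`), so over an algebraically closed field every `u` has a preimage `x₀`, and some
`(x₀, y₀)` lies on `E₁`. Its image has the same `x`-coordinate as the target point `Q`, hence is
`Q` or `-Q`; as the map commutes with `y ↦ -y`, one of `(x₀, ±y₀)` maps to `Q`.
-/

open Polynomial

namespace WeierstrassCurve.Affine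

variable {k : Type*} [Field k]

lemma exists_nonsingular_of_isAlgClosed [IsAlgClosed k] (W : Affine k) (hΔ : W.Δ ≠ 0) (x : k) :
    ∃ y, W.Nonsingular x y := by
  obtain ⟨y, hy⟩ := IsAlgClosed.exists_root
    (C 1 * X ^ 2 + C (W.a₁ * x + W.a₃) * X + C (-(x ^ 3 + W.a₂ * x ^ 2 + W.a₄ * x + W.a₆)))
    (by rw [degree_quadratic one_ne_zero]; decide)
  refine ⟨y, (W.equation_iff_nonsingular_of_Δ_ne_zero hΔ).mp ?_⟩
  simp only [IsRoot, eval_add, eval_mul, eval_pow, eval_C, eval_X] at hy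
  rw [equation_iff]
  linear_combination hy

namespace Point

variable {W₁ W₂ : Affine k}

/-- The shape of a map `(x, y) ↦ (X x, Y x * y)` where `X` has its only pole at `x = 0`. -/
def IsGivenBy (φ : W₁.Point → W₂.Point) (X Y : k → k) : Prop :=
  φ 0 = 0 ∧ ∀ x y (h : W₁.Nonsingular x y),
    (x = 0 → φ (some _ _ h) = 0) ∧
    (x ≠ 0 → ∃ h' : W₂.Nonsingular (X x) (Y x * y), φ (some _ _ h) = some _ _ h')

namespace IsGivenBy

variable {φ : W₁.Point → W₂.Point} {X Y : k → k}

lemma map_some_eq_zero_iff (hφ : IsGivenBy φ X Y) {x y : k} (h : W₁.Nonsingular x y) :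
    φ (some _ _ h) = 0 ↔ x = 0 := by
  refine ⟨fun h0 => ?_, (hφ.2 x y h).1⟩
  by_contra hx
  obtain ⟨h', hφx⟩ := (hφ.2 x y h).2 hx
  exact some_ne_zero h' (hφx ▸ h0)

lemma map_neg (hφ : IsGivenBy φ X Y) (h₁ : W₁.a₁ = 0) (h₃ : W₁.a₃ = 0) (h₁' : W₂.a₁ = 0)
    (h₃' : W₂.a₃ = 0) (P : W₁.Point) : φ (-P) = -φ P := by
  rcases P with _ | ⟨x, y, h⟩
  · rw [zero_def.symm, neg_zero, hφ.1, neg_zero]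
  by_cases hx : x = 0
  · rw [neg_some, (hφ.2 x _ _).1 hx, (hφ.2 x y h).1 hx, neg_zero]
  obtain ⟨h', hφx⟩ := (hφ.2 x y h).2 hx
  obtain ⟨h'', hφx'⟩ := (hφ.2 x _ ((nonsingular_neg ..).mpr h)).2 hx
  rw [neg_some, hφx', hφx, neg_some]
  simp only [some.injEq, negY, h₁, h₃, h₁', h₃', zero_mul, sub_zero, true_and]
  ring

lemma surjective [IsAlgClosed k] (hφ : IsGivenBy φ X Y) (h₁ : W₁.a₁ = 0) (h₃ : W₁.a₃ = 0)
    (h₁' : W₂.a₁ = 0) (h₃' : W₂.a₃ = 0) (hΔ : W₁.Δ ≠ 0) (hX : ∀ u, ∃ x ≠ 0, X x = u) :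
    Function.Surjective φ := by
  rintro (_ | ⟨u, v, hQ⟩)
  · exact ⟨0, hφ.1⟩
  obtain ⟨x, hx, rfl⟩ := hX u
  obtain ⟨y, h⟩ := W₁.exists_nonsingular_of_isAlgClosed hΔ x
  obtain ⟨h', hφx⟩ := (hφ.2 x y h).2 hx
  rcases (X_eq_iff (h₁ := h') (h₂ := hQ)).mp rfl with hQ' | hQ'
  · exact ⟨_, hφx.trans hQ'⟩
  · exact ⟨-some _ _ h, by rw [hφ.map_neg h₁ h₃ h₁' h₃', hφx, hQ', neg_neg]⟩

end IsGivenBy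

lemma ncard_zero_or_X_eq_zero {W : Affine k} {β : k} (hβ : W.Nonsingular 0 β)
    (hβ' : W.Nonsingular 0 (-β)) (hne : β ≠ -β) :
    {P : W.Point | P = 0 ∨ (∃ h : W.Nonsingular 0 β, P = some _ _ h) ∨
      (∃ h : W.Nonsingular 0 (-β), P = some _ _ h)}.ncard = 3 := by
  have hset : {P : W.Point | P = 0 ∨ (∃ h : W.Nonsingular 0 β, P = some _ _ h) ∨
      (∃ h : W.Nonsingular 0 (-β), P = some _ _ h)} = {0, some _ _ hβ, some _ _ hβ'} := by
    ext P
    simp only [Set.mem_ofPred_eq, Set.mem_insert_iff, Set.mem_singleton_iff,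
      exists_prop_of_true hβ, exists_prop_of_true hβ']
  rw [hset, Set.ncard_insert_of_notMem, Set.ncard_pair]
  · simpa only [ne_eq, some.injEq, true_and] using hne
  · simp only [Set.mem_insert_iff, Set.mem_singleton_iff, not_or]
    exact ⟨(some_ne_zero hβ).symm, (some_ne_zero hβ').symm⟩

end Point

end WeierstrassCurve.Affine

namespace ThreeIsogeny

open WeierstrassCurve.Affine Point

variable {k : Type*} [Field k]

/-- The curve `y² = x³ + a(x - b)²`. -/
abbrev E (a b : k) : WeierstrassCurve.Affine k :=
  { a₁ := 0, a₂ := a, a₃ := 0, a₄ := -2 * a * b, a₆ := a * b ^ 2 }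

lemma E_equation_iff (a b x y : k) : (E a b).Equation x y ↔ y ^ 2 = x ^ 3 + a * (x - b) ^ 2 := by
  rw [equation_iff]
  constructor <;> intro h <;> linear_combination h

lemma E_Δ (a b : k) : (E a b).Δ = -16 * a ^ 2 * b ^ 3 * (4 * a + 27 * b) := by
  simp only [WeierstrassCurve.Δ, WeierstrassCurve.b₂, WeierstrassCurve.b₄, WeierstrassCurve.b₆,
    WeierstrassCurve.b₈]
  ring

lemma E_Δ_ne_zero {a b : k} (h2 : (2 : k) ≠ 0) (ha : a ≠ 0) (hb : b ≠ 0)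
    (hs : 4 * a + 27 * b ≠ 0) : (E a b).Δ ≠ 0 := by
  have h16 : (16 : k) ≠ 0 := by
    simpa only [show (16 : k) = 2 ^ 4 by norm_num] using pow_ne_zero 4 h2
  rw [E_Δ]
  exact mul_ne_zero (mul_ne_zero (mul_ne_zero (neg_ne_zero.mpr h16) (pow_ne_zero _ ha))
    (pow_ne_zero _ hb)) hs

lemma E_nonsingular_zero_iff {a b y : k} (hΔ : (E a b).Δ ≠ 0) :
    (E a b).Nonsingular 0 y ↔ y ^ 2 = a * b ^ 2 := by
  rw [← equation_iff_nonsingular_of_Δ_ne_zero hΔ, E_equation_iff]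
  ring_nf

/-- `X(x) = u` amounts to `3x³ + (4a - 3u)x² - 12abx + 12ab² = 0`, whose roots are nonzero. -/
lemma exists_ne_zero_X_eq [IsAlgClosed k] (h2 : (2 : k) ≠ 0) (h3 : (3 : k) ≠ 0) {a b : k}
    (ha : a ≠ 0) (hb : b ≠ 0) (u : k) :
    ∃ x ≠ 0, (3 * x ^ 3 + 4 * a * x ^ 2 - 12 * a * b * x + 12 * a * b ^ 2) / (3 * x ^ 2) = u := by
  obtain ⟨x, hx⟩ := IsAlgClosed.exists_root
    (C 3 * X ^ 3 + C (4 * a - 3 * u) * X ^ 2 + C (-(12 * a * b)) * X + C (12 * a * b ^ 2))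
    (by rw [degree_cubic h3]; decide)
  simp only [IsRoot, eval_add, eval_mul, eval_pow, eval_C, eval_X] at hx
  have hx0 : x ≠ 0 := by
    rintro rfl
    have h12 : (12 : k) ≠ 0 := by
      simpa only [show (12 : k) = 3 * 2 ^ 2 by norm_num] using mul_ne_zero h3 (pow_ne_zero 2 h2)
    exact mul_ne_zero (mul_ne_zero h12 ha) (pow_ne_zero 2 hb) (by linear_combination hx)
  refine ⟨x, hx0, ?_⟩
  field_simp
  linear_combination hx

lemma ker_eq {a b β : k} {W : WeierstrassCurve.Affine k} {φ : (E a b).Point → W.Point}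
    {X Y : k → k} (hφ : IsGivenBy φ X Y) (hβ : β ^ 2 = a * b ^ 2) :
    {P | φ P = 0} = {P | P = 0 ∨ (∃ h : (E a b).Nonsingular 0 β, P = some _ _ h) ∨
      (∃ h : (E a b).Nonsingular 0 (-β), P = some _ _ h)} := by
  ext (_ | ⟨x, y, h⟩)
  · simpa only [← zero_def, Set.mem_ofPred_eq, true_or, iff_true] using hφ.1
  simp only [Set.mem_ofPred_eq, hφ.map_some_eq_zero_iff, some_ne_zero, false_or]
  constructor
  · rintro rfl
    have hy : y ^ 2 = β ^ 2 := by
      rw [hβ, (E_equation_iff a b 0 y).mp h.1]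
      ring
    rcases sq_eq_sq_iff_eq_or_eq_neg.mp hy with rfl | rfl
    exacts [Or.inl ⟨h, rfl⟩, Or.inr ⟨h, rfl⟩]
  · rintro (⟨_, hP⟩ | ⟨_, hP⟩) <;> exact (some.inj hP).1

end ThreeIsogeny

open ThreeIsogeny WeierstrassCurve.Affine.Point

theorem three_isogeny_surjective_kernel_general {k : Type*} [Field k] [IsAlgClosed k]
    (h2 : (2 : k) ≠ 0) (h3 : (3 : k) ≠ 0)
    (a b : k) (hab : a * b * (4 * a + 27 * b) ≠ 0)
    (a' b' : k)
    (W₁ W₂ : WeierstrassCurve.Affine k)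
    (hW₁ : W₁ = { a₁ := 0, a₂ := a, a₃ := 0, a₄ := -2 * a * b, a₆ := a * b ^ 2 })
    (hW₂ : W₂ = { a₁ := 0, a₂ := a', a₃ := 0, a₄ := -2 * a' * b', a₆ := a' * b' ^ 2 })
    (φ : W₁.Point → W₂.Point)
    (hφ0 : φ 0 = 0)
    (hφ : ∀ (x y : k) (h : W₁.Nonsingular x y),
      (x = 0 → φ (WeierstrassCurve.Affine.Point.some _ _ h) = 0) ∧
      (x ≠ 0 → ∃ h' : W₂.Nonsingular
          ((3 * x ^ 3 + 4 * a * x ^ 2 - 12 * a * b * x + 12 * a * b ^ 2) / (3 * x ^ 2))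
          (-((x ^ 3 + 4 * a * b * x - 8 * a * b ^ 2) / x ^ 3) * y),
        φ (WeierstrassCurve.Affine.Point.some _ _ h) = WeierstrassCurve.Affine.Point.some _ _ h')) :
    Function.Surjective φ ∧
    (∀ β : k, β ^ 2 = a * b ^ 2 →
      {P : W₁.Point | φ P = 0} =
        {P : W₁.Point | P = 0 ∨
          (∃ h : W₁.Nonsingular 0 β, P = WeierstrassCurve.Affine.Point.some _ _ h) ∨
          (∃ h : W₁.Nonsingular 0 (-β), P = WeierstrassCurve.Affine.Point.some _ _ h)}) ∧
    {P : W₁.Point | φ P = 0}.ncard = 3 := by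
  simp only [mul_ne_zero_iff] at hab
  obtain ⟨⟨ha, hb⟩, hs⟩ := hab
  subst hW₁ hW₂
  have hφ' : IsGivenBy φ _ _ := ⟨hφ0, hφ⟩
  have hΔ := E_Δ_ne_zero h2 ha hb hs
  refine ⟨hφ'.surjective rfl rfl rfl rfl hΔ (exists_ne_zero_X_eq h2 h3 ha hb),
    fun β hβ => ker_eq hφ' hβ, ?_⟩
  obtain ⟨β, hβ⟩ := IsAlgClosed.exists_pow_nat_eq (a * b ^ 2) two_pos
  have hβ0 : β ≠ 0 := by
    rintro rfl
    exact mul_ne_zero ha (pow_ne_zero 2 hb) (by linear_combination -hβ)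
  rw [ker_eq hφ' hβ]
  exact ncard_zero_or_X_eq_zero ((E_nonsingular_zero_iff hΔ).2 hβ)
    ((E_nonsingular_zero_iff hΔ).2 (by rw [neg_sq, hβ]))
    (fun h => hβ0 ((mul_eq_zero.mp (by linear_combination h : 2 * β = 0)).resolve_left h2))

/-- Over an algebraically closed field of characteristic not 2, 3, the 3-isogeny
`φ : E₁(k) → E₂(k)` with `E₁ : y² = x³ + a(x-b)²`, `E₂ : y² = x³ - 3a(x - (4a+27b)/9)²`
is surjective, and its kernel consists of exactly the three points `O`, `(0, β)`, `(0, -β)`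
where `β² = ab²`; in particular the kernel has exactly 3 elements. -/
theorem three_isogeny_surjective_kernel {k : Type*} [Field k] [IsAlgClosed k]
    (h2 : (2 : k) ≠ 0) (h3 : (3 : k) ≠ 0)
    (a b : k) (hab : a * b * (4 * a + 27 * b) ≠ 0)
    (a' b' : k) (ha' : a' = -3 * a) (hb' : b' = (4 * a + 27 * b) / 9)
    (W₁ W₂ : WeierstrassCurve.Affine k)
    (hW₁ : W₁ = { a₁ := 0, a₂ := a, a₃ := 0, a₄ := -2 * a * b, a₆ := a * b ^ 2 })
    (hW₂ : W₂ = { a₁ := 0, a₂ := a', a₃ := 0, a₄ := -2 * a' * b', a₆ := a' * b' ^ 2 })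
    (φ : W₁.Point → W₂.Point)
    (hφ0 : φ 0 = 0)
    (hφ : ∀ (x y : k) (h : W₁.Nonsingular x y),
      (x = 0 → φ (WeierstrassCurve.Affine.Point.some _ _ h) = 0) ∧
      (x ≠ 0 → ∃ h' : W₂.Nonsingular
          ((3 * x ^ 3 + 4 * a * x ^ 2 - 12 * a * b * x + 12 * a * b ^ 2) / (3 * x ^ 2))
          (-((x ^ 3 + 4 * a * b * x - 8 * a * b ^ 2) / x ^ 3) * y),
        φ (WeierstrassCurve.Affine.Point.some _ _ h) = WeierstrassCurve.Affine.Point.some _ _ h')) :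
    Function.Surjective φ ∧
    (∀ β : k, β ^ 2 = a * b ^ 2 →
      {P : W₁.Point | φ P = 0} =
        {P : W₁.Point | P = 0 ∨
          (∃ h : W₁.Nonsingular 0 β, P = WeierstrassCurve.Affine.Point.some _ _ h) ∨
          (∃ h : W₁.Nonsingular 0 (-β), P = WeierstrassCurve.Affine.Point.some _ _ h)}) ∧
    {P : W₁.Point | φ P = 0}.ncard = 3 :=
  three_isogeny_surjective_kernel_general h2 h3 a b hab a' b' W₁ W₂ hW₁ hW₂ φ hφ0 hφ
end

section
/- Let k be a field of characteristic different from 2 and 3, let a, b, u ∈ k, and set a' = −3a and b' = (4a+27b)/9. Write f₁(x) = x³ + a(x−b)², f₂(x) = x³ + a'(x−b')², and φ_x(x) = (3x³+4ax²−12abx+12ab²)/(3x²). Then for every x ∈ k with x ≠ 0 one has f₂(φ_x(x)) − u⁶·f₁(x) = f₁(x)·((x³+4abx−8ab²)² − u⁶x⁶)/x⁶ = f₁(x)·(x³+4abx−8ab² − u³x³)·(x³+4abx−8ab² + u³x³)/x⁶. In particular, the solutions with f₁(x) ≠ 0 of the equation f₂(φ_x(x)) = u⁶ f₁(x) are exactly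 the roots of the two cubic polynomials p⁺(x) = (1−u³)x³+4abx−8ab² and p⁻(x) = (1+u³)x³+4abx−8ab². -/
/-- Factorization identity behind the divisors `D_φ^±`: for `x ≠ 0`,
`f₂(φ_x(x)) - u⁶ f₁(x) = f₁(x)((x³+4abx-8ab²)² - u⁶x⁶)/x⁶
  = f₁(x)(x³+4abx-8ab² - u³x³)(x³+4abx-8ab² + u³x³)/x⁶`;
in particular, when `f₁(x) ≠ 0`, the equation `f₂(φ_x(x)) = u⁶ f₁(x)` holds exactly when
`(1-u³)x³+4abx-8ab² = 0` or `(1+u³)x³+4abx-8ab² = 0`. -/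
theorem three_isogeny_fiber_factorization {k : Type*} [Field k]
    (h2 : (2 : k) ≠ 0) (h3 : (3 : k) ≠ 0)
    (a b u a' b' : k) (ha' : a' = -3 * a) (hb' : b' = (4 * a + 27 * b) / 9)
    (x : k) (hx : x ≠ 0) :
    (((3 * x ^ 3 + 4 * a * x ^ 2 - 12 * a * b * x + 12 * a * b ^ 2) / (3 * x ^ 2)) ^ 3 +
        a' * ((3 * x ^ 3 + 4 * a * x ^ 2 - 12 * a * b * x + 12 * a * b ^ 2) / (3 * x ^ 2)
          - b') ^ 2 - u ^ 6 * (x ^ 3 + a * (x - b) ^ 2) =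
      (x ^ 3 + a * (x - b) ^ 2) *
        ((x ^ 3 + 4 * a * b * x - 8 * a * b ^ 2) ^ 2 - u ^ 6 * x ^ 6) / x ^ 6) ∧
    (((3 * x ^ 3 + 4 * a * x ^ 2 - 12 * a * b * x + 12 * a * b ^ 2) / (3 * x ^ 2)) ^ 3 +
        a' * ((3 * x ^ 3 + 4 * a * x ^ 2 - 12 * a * b * x + 12 * a * b ^ 2) / (3 * x ^ 2)
          - b') ^ 2 - u ^ 6 * (x ^ 3 + a * (x - b) ^ 2) =
      (x ^ 3 + a * (x - b) ^ 2) *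
        (x ^ 3 + 4 * a * b * x - 8 * a * b ^ 2 - u ^ 3 * x ^ 3) *
        (x ^ 3 + 4 * a * b * x - 8 * a * b ^ 2 + u ^ 3 * x ^ 3) / x ^ 6) ∧
    (x ^ 3 + a * (x - b) ^ 2 ≠ 0 →
      (((3 * x ^ 3 + 4 * a * x ^ 2 - 12 * a * b * x + 12 * a * b ^ 2) / (3 * x ^ 2)) ^ 3 +
          a' * ((3 * x ^ 3 + 4 * a * x ^ 2 - 12 * a * b * x + 12 * a * b ^ 2) / (3 * x ^ 2)
            - b') ^ 2 = u ^ 6 * (x ^ 3 + a * (x - b) ^ 2) ↔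
        (1 - u ^ 3) * x ^ 3 + 4 * a * b * x - 8 * a * b ^ 2 = 0 ∨
        (1 + u ^ 3) * x ^ 3 + 4 * a * b * x - 8 * a * b ^ 2 = 0)) := by
  subst ha' hb'
  have h9 : (9 : k) ≠ 0 := by
    have : (9 : k) = 3 * 3 := by norm_num
    rw [this]; exact mul_ne_zero h3 h3
  have key2 : ((3 * x ^ 3 + 4 * a * x ^ 2 - 12 * a * b * x + 12 * a * b ^ 2) / (3 * x ^ 2)) ^ 3 +
        (-3 * a) * ((3 * x ^ 3 + 4 * a * x ^ 2 - 12 * a * b * x + 12 * a * b ^ 2) / (3 * x ^ 2)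
          - (4 * a + 27 * b) / 9) ^ 2 - u ^ 6 * (x ^ 3 + a * (x - b) ^ 2) =
      (x ^ 3 + a * (x - b) ^ 2) *
        (x ^ 3 + 4 * a * b * x - 8 * a * b ^ 2 - u ^ 3 * x ^ 3) *
        (x ^ 3 + 4 * a * b * x - 8 * a * b ^ 2 + u ^ 3 * x ^ 3) / x ^ 6 := by
    have hx2 : (3:k) * x ^ 2 ≠ 0 := mul_ne_zero h3 (pow_ne_zero 2 hx)
    field_simp [h3, h9, hx2]
    ring
  have key1 : ((3 * x ^ 3 + 4 * a * x ^ 2 - 12 * a * b * x + 12 * a * b ^ 2) / (3 * x ^ 2)) ^ 3 +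
        (-3 * a) * ((3 * x ^ 3 + 4 * a * x ^ 2 - 12 * a * b * x + 12 * a * b ^ 2) / (3 * x ^ 2)
          - (4 * a + 27 * b) / 9) ^ 2 - u ^ 6 * (x ^ 3 + a * (x - b) ^ 2) =
      (x ^ 3 + a * (x - b) ^ 2) *
        ((x ^ 3 + 4 * a * b * x - 8 * a * b ^ 2) ^ 2 - u ^ 6 * x ^ 6) / x ^ 6 := by
    rw [key2]; ring
  refine ⟨key1, key2, fun hf1 => ?_⟩
  rw [← sub_eq_zero, key2, div_eq_zero_iff]
  constructor
  · rintro (h | h)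
    · rcases mul_eq_zero.1 h with h | h
      · rcases mul_eq_zero.1 h with h | h
        · exact absurd h hf1
        · left; rw [← h]; ring
      · right; rw [← h]; ring
    · exact absurd h (pow_ne_zero 6 hx)
  · rintro (h | h)
    · left
      have : x ^ 3 + 4 * a * b * x - 8 * a * b ^ 2 - u ^ 3 * x ^ 3 = 0 := by rw [← h]; ring
      rw [this]; ring
    · left
      have : x ^ 3 + 4 * a * b * x - 8 * a * b ^ 2 + u ^ 3 * x ^ 3 = 0 := by rw [← h]; ring
      rw [this]; ring
end

section
/- Let k be a field of characteristic 0 and let s ∈ k with s ≠ 0, s ≠ 3, s ≠ −3 (or s transcendental over ℚ). Set S = (1/2)(s/3 + 3/s), and assume S ≠ 1. Define X = (S³ − 93S² + 963S + 4129)/(64(S − 1)) and Y = 3s(s+3)(S⁴ − 140S³ + 4758S² − 13100S + 258481)/(256(s−3)³). Then Y² = X³ − 27(s − 506 + 9/s). (This is the section P⁽¹⁾_φ of the Inose fibration for the singular K3 surface X_{[3,3,3]} arising from the 3-isogeny E₁ → E₂.) -/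
theorem half_mul_div_add_div_sub_one {k : Type*} [Field k] [NeZero (2 : k)] {a s : k}
    (ha : a ≠ 0) (hs : s ≠ 0) :
    1 / 2 * (s / a + a / s) - 1 = (s - a) ^ 2 / (2 * a * s) := by
  field_simp
  ring

theorem section_P1_X333_general {k : Type*} [Field k] [CharZero k]
    (s : k) (hs0 : s ≠ 0) (hs3 : s ≠ 3)
    (S : k) (hS : S = 1 / 2 * (s / 3 + 3 / s))
    (X Y : k)
    (hX : X = (S ^ 3 - 93 * S ^ 2 + 963 * S + 4129) / (64 * (S - 1)))
    (hY : Y = 3 * s * (s + 3) *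
      (S ^ 4 - 140 * S ^ 3 + 4758 * S ^ 2 - 13100 * S + 258481) / (256 * (s - 3) ^ 3)) :
    Y ^ 2 = X ^ 3 - 27 * (s - 506 + 9 / s) := by
  have hs3' : s - 3 ≠ 0 := sub_ne_zero.mpr hs3
  -- With `S - 1 = (s - 3)² / (6s)` the only denominators left are powers of `s` and `s - 3`,
  -- so clearing them reduces the claim to a polynomial identity in `s`.
  rw [hY, hX, hS, half_mul_div_add_div_sub_one three_ne_zero hs0]
  field_simp
  ring

/-- The section `P⁽¹⁾_φ` of the Inose fibration for the singular K3 surface `X_{[3,3,3]}`: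
with `S = (1/2)(s/3 + 3/s)`, the point
`X = (S³-93S²+963S+4129)/(64(S-1))`, `Y = 3s(s+3)(S⁴-140S³+4758S²-13100S+258481)/(256(s-3)³)`
satisfies `Y² = X³ - 27(s - 506 + 9/s)`. -/
theorem section_P1_X333 {k : Type*} [Field k] [CharZero k]
    (s : k) (hs0 : s ≠ 0) (hs3 : s ≠ 3) (hs3' : s ≠ -3)
    (S : k) (hS : S = 1 / 2 * (s / 3 + 3 / s)) (hS1 : S ≠ 1)
    (X Y : k)
    (hX : X = (S ^ 3 - 93 * S ^ 2 + 963 * S + 4129) / (64 * (S - 1)))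
    (hY : Y = 3 * s * (s + 3) *
      (S ^ 4 - 140 * S ^ 3 + 4758 * S ^ 2 - 13100 * S + 258481) / (256 * (s - 3) ^ 3)) :
    Y ^ 2 = X ^ 3 - 27 * (s - 506 + 9 / s) :=
  section_P1_X333_general s hs0 hs3 S hS X Y hX hY
end

section
/- Let k be a field of characteristic 0 and let t ∈ k with t ≠ 0 (or t transcendental over ℚ). Set T₋ = t − 3/t and T₊ = t + 3/t. Define X = (1/4)T₋² − 6T₋ + 15 and Y = (1/8)T₊(T₋² − 36T₋ + 300). Then Y² = X³ − 27(t² − 506 + 9/t²). (This is the section P⁽²⁾_φ of the fibration F⁽²⁾ on the Kummer surface Km(E₁×E₂) in the case of the singular K3 surface X_{[3,3,3]}.) -/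
/-- The section `P⁽²⁾_φ` of the fibration `F⁽²⁾` on `Km(E₁×E₂)` for the singular K3 surface
`X_{[3,3,3]}`: with `T₋ = t - 3/t`, `T₊ = t + 3/t`, the point
`X = (1/4)T₋² - 6T₋ + 15`, `Y = (1/8)T₊(T₋² - 36T₋ + 300)` satisfies
`Y² = X³ - 27(t² - 506 + 9/t²)`. -/
theorem section_P2_X333 {k : Type*} [Field k] [CharZero k]
    (t : k) (ht : t ≠ 0)
    (Tm Tp X Y : k)
    (hTm : Tm = t - 3 / t) (hTp : Tp = t + 3 / t)
    (hX : X = 1 / 4 * Tm ^ 2 - 6 * Tm + 15)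
    (hY : Y = 1 / 8 * Tp * (Tm ^ 2 - 36 * Tm + 300)) :
    Y ^ 2 = X ^ 3 - 27 * (t ^ 2 - 506 + 9 / t ^ 2) := by
  subst hTm hTp hX hY
  have hti : t * t⁻¹ = 1 := mul_inv_cancel₀ ht
  simp only [div_eq_mul_inv, inv_pow]
  linear_combination
    (17037 + 12150 * t⁻¹ + (6399/2) * t⁻¹ ^ 2 + (729/2) * t⁻¹ ^ 3 + (243/16) * t⁻¹ ^ 4
      - 4050 * t - 2133 * t * t⁻¹ - (729/2) * t * t⁻¹ ^ 2 - (81/4) * t * t⁻¹ ^ 3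
      + (711/2) * t ^ 2 + (243/2) * t ^ 2 * t⁻¹ + (81/8) * t ^ 2 * t⁻¹ ^ 2
      - (27/2) * t ^ 3 - (9/4) * t ^ 3 * t⁻¹ + (3/16) * t ^ 4) * hti
end

section
/- Let k be a field of characteristic 0 containing elements ω, c, δ with ω² + ω + 1 = 0, c³ = 2 and δ² = −3, and let t ∈ k with t ≠ 0 (or t transcendental). Then the points R₂₂ = (−15c²ω, −3δ(t − 3/t)) and R₂₃ = (−24ω, −3δ(t + 3/t)) both satisfy the equation Y² = X³ − 27(t² − 506 + 9/t²); moreover their images R₃₃ = (−15c²ω·ω, 3δ(t − 3/t)) and R₃₂ = (−24ω·ω, 3δ(t + 3/t)) under (X,Y) ↦ (ωX, −Y) also satisfy this equation. -/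
/-- The sections `R₂₂`, `R₂₃` of `F⁽²⁾` for the singular K3 surface `X_{[3,3,3]}`, together
with their images `R₃₃`, `R₃₂` under `(X,Y) ↦ (ωX, -Y)`, satisfy
`Y² = X³ - 27(t² - 506 + 9/t²)`; here `ω² + ω + 1 = 0`, `c³ = 2` and `δ² = -3`. -/
theorem sections_R_X333 {k : Type*} [Field k] [CharZero k]
    (ω c δ : k) (hω : ω ^ 2 + ω + 1 = 0) (hc : c ^ 3 = 2) (hδ : δ ^ 2 = -3)
    (t : k) (ht : t ≠ 0) :
    ((-3 * δ * (t - 3 / t)) ^ 2 =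
      (-15 * c ^ 2 * ω) ^ 3 - 27 * (t ^ 2 - 506 + 9 / t ^ 2)) ∧
    ((-3 * δ * (t + 3 / t)) ^ 2 =
      (-24 * ω) ^ 3 - 27 * (t ^ 2 - 506 + 9 / t ^ 2)) ∧
    ((-(-3 * δ * (t - 3 / t))) ^ 2 =
      (ω * (-15 * c ^ 2 * ω)) ^ 3 - 27 * (t ^ 2 - 506 + 9 / t ^ 2)) ∧
    ((-(-3 * δ * (t + 3 / t))) ^ 2 =
      (ω * (-24 * ω)) ^ 3 - 27 * (t ^ 2 - 506 + 9 / t ^ 2)) := by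
  have hω3 : ω ^ 3 = 1 := by linear_combination (ω - 1) * hω
  have hc6 : c ^ 6 = 4 := by linear_combination (c ^ 3 + 2) * hc
  refine ⟨?_, ?_, ?_, ?_⟩ <;> field_simp
  · linear_combination 9 * (t ^ 2 - 3) ^ 2 * hδ + 3375 * t ^ 2 * ω ^ 3 * hc6 + 13500 * t ^ 2 * hω3
  · linear_combination 9 * (t ^ 2 + 3) ^ 2 * hδ + 13824 * t ^ 2 * hω3
  · linear_combination 9 * (t ^ 2 - 3) ^ 2 * hδ + 3375 * t ^ 2 * ω ^ 6 * hc6 +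
      13500 * t ^ 2 * (ω ^ 3 + 1) * hω3
  · linear_combination 9 * (t ^ 2 + 3) ^ 2 * hδ + 13824 * t ^ 2 * (ω ^ 3 + 1) * hω3
end
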